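/- arXiv:0911.0630 — 7 statements merged into one kernel-verified Lean document; each statement's English description precedes it below -/
import Mathlib

section
/- Let X be a finite set. The family of total orders on X, viewed inside the free module over a commutative semiring S on the set of partial orders of X, is linearly independent modulo observational equivalence: if two S-linear combinations of total orders u = Σ λ_t · t and v = Σ μ_t · t satisfy ⟨u, s⟩ = ⟨v, s⟩ for every partial order s on X, then λ_t = μ_t for all total orders t, where ⟨r, s⟩ is defined on orders r, s by ⟨r,s⟩ = 1 if r and s are compatible (admit a common linear extension) and 0 otherwise, extended bilinearly. -/
/-!
Two distinct total orders are never compatible: some pair is ordered one way by the first and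
the other way by the second, which is a 2-cycle in their union. A partial order is compatible
with itself. Hence the pairing between total orders is the identity matrix, and pairing `u` and
`v` against the total order `t j` (itself a partial order) reads off `lam j = mu j`.
-/

/-- Two relations are compatible when the transitive closure of their union is
antisymmetric (i.e. the union is acyclic). -/
def Compatible {X : Type*} (r s : X → X → Prop) : Prop :=
  ∀ a b : X, Relation.TransGen (fun u v => r u v ∨ s u v) a b →
    Relation.TransGen (fun u v => r u v ∨ s u v) b a → a = b

open Classical in
/-- The compatibility pairing with values in a commutative semiring. -/
noncomputable def bracket {X : Type*} (S : Type*) [CommSemiring S]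
    (r s : X → X → Prop) : S :=
  if Compatible r s then 1 else 0

section Compatible

variable {X : Type*}

theorem Compatible.symm {r s : X → X → Prop} (hc : Compatible r s) : Compatible s r := by
  have swap_union : ∀ {a b}, Relation.TransGen (fun u v => s u v ∨ r u v) a b →
      Relation.TransGen (fun u v => r u v ∨ s u v) a b :=
    fun h => Relation.TransGen.mono (fun _ _ => Or.symm) _ _ h
  exact fun a b hab hba => hc a b (swap_union hab) (swap_union hba)

theorem compatible_self (r : X → X → Prop) [IsTrans X r] [Std.Antisymm r] :
    Compatible r r := by
  intro a b hab hba
  simp only [or_self, Relation.transGen_eq_self] at hab hba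
  exact antisymm hab hba

theorem Compatible.le_of_total {r s : X → X → Prop} [Std.Total s] (hc : Compatible r s) :
    r ≤ s := by
  intro a b hab
  by_contra hsab
  have hsba : s b a := (total_of s a b).resolve_left hsab
  obtain rfl : a = b :=
    hc a b (.single (Or.inl hab)) (.single (Or.inr hsba))
  exact hsab hsba

theorem Compatible.eq_of_total {r s : X → X → Prop} [Std.Total r] [Std.Total s]
    (hc : Compatible r s) : r = s :=
  le_antisymm hc.le_of_total hc.symm.le_of_total

end Compatible

theorem bracket_linearOrder_eq_ite {X S ι : Type*} [CommSemiring S] [DecidableEq ι]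
    {t : ι → X → X → Prop} (ht : Function.Injective t) (hlin : ∀ i, IsLinearOrder X (t i))
    (i j : ι) : bracket S (t i) (t j) = if i = j then 1 else 0 := by
  by_cases hij : i = j
  · subst hij
    simp [bracket, compatible_self (t i)]
  · have : ¬ Compatible (t i) (t j) := fun hc => hij (ht hc.eq_of_total)
    simp [bracket, this, hij]

theorem stmt6_general {X : Type*} {S : Type*} [CommSemiring S]
    {ι : Type*} [Fintype ι] (t : ι → (X → X → Prop)) (ht : Function.Injective t)
    (hlin : ∀ i, IsLinearOrder X (t i)) (lam mu : ι → S)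
    (h : ∀ s : X → X → Prop, IsPartialOrder X s →
      ∑ i, lam i * bracket S (t i) s = ∑ i, mu i * bracket S (t i) s) :
    lam = mu := by
  classical
  funext j
  simpa [bracket_linearOrder_eq_ite ht hlin, mul_ite, Finset.sum_ite_eq'] using
    h (t j) (hlin j).toIsPartialOrder

theorem stmt6 {X : Type*} [Finite X] {S : Type*} [CommSemiring S]
    {ι : Type*} [Fintype ι] (t : ι → (X → X → Prop)) (ht : Function.Injective t)
    (hlin : ∀ i, IsLinearOrder X (t i)) (lam mu : ι → S)
    (h : ∀ s : X → X → Prop, IsPartialOrder X s →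
      ∑ i, lam i * bracket S (t i) s = ∑ i, mu i * bracket S (t i) s) :
    lam = mu :=
  stmt6_general t ht hlin lam mu h
end

section
/- Step 1 of the three-point splitting identity: with a = [x<y], c = [x<y, x<z], d = [x<y, z<y] as partial orders on {x,y,z}, a partial order s on {x,y,z} is compatible with a if and only if s is compatible with c or s is compatible with d. -/
/-- `[x<y]`: the smallest partial order with `x < y`. -/
def relA {X : Type*} (x y : X) : X → X → Prop :=
  fun p q => p = q ∨ (p = x ∧ q = y)

/-- `[x<z<y]`: the smallest partial order with `x < z` and `z < y`. -/
def relB {X : Type*} (x y z : X) : X → X → Prop :=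
  fun p q => p = q ∨ (p = x ∧ q = z) ∨ (p = z ∧ q = y) ∨ (p = x ∧ q = y)

/-- `[x<y, x<z]`: the smallest partial order with `x < y` and `x < z`. -/
def relC {X : Type*} (x y z : X) : X → X → Prop :=
  fun p q => p = q ∨ (p = x ∧ q = y) ∨ (p = x ∧ q = z)

/-- `[x<y, z<y]`: the smallest partial order with `x < y` and `z < y`. -/
def relD {X : Type*} (x y z : X) : X → X → Prop :=
  fun p q => p = q ∨ (p = x ∧ q = y) ∨ (p = z ∧ q = y)

/-!
Adding one edge `u → v` to an acyclic relation creates a cycle only if the relation already has a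
path from `v` to `u`. Now `[x<y, x<z] ⊔ s` is `[x<y] ⊔ s` plus the edge `x → z`, and `[x<y, z<y] ⊔ s`
is `[x<y] ⊔ s` plus the edge `z → y`. If both were cyclic, `[x<y] ⊔ s` would contain paths `z → x`
and `y → z`, hence a cycle `x → y → z → x`. The converse holds because `[x<y]` lies below both.
-/

open Relation

section Acyclic

variable {X : Type*}

def Acyclic (r : X → X → Prop) : Prop :=
  ∀ a b : X, TransGen r a b → TransGen r b a → a = b

def singleEdge (u v : X) : X → X → Prop :=
  fun p q => p = u ∧ q = v

theorem compatible_iff_acyclic_sup {r s : X → X → Prop} : Compatible r s ↔ Acyclic (r ⊔ s) :=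
  Iff.rfl

theorem Acyclic.mono {r r' : X → X → Prop} (h : r ≤ r') (hr' : Acyclic r') : Acyclic r :=
  fun a b hab hba => hr' a b (TransGen.mono h a b hab) (TransGen.mono h b a hba)

theorem Compatible.mono_left {r r' s : X → X → Prop} (h : r ≤ r') (hc : Compatible r' s) :
    Compatible r s :=
  Acyclic.mono (sup_le_sup_right h s) hc

theorem transGen_sup_singleEdge {r : X → X → Prop} {u v a b : X}
    (h : TransGen (r ⊔ singleEdge u v) a b) :
    ReflTransGen r a b ∨ (ReflTransGen r a u ∧ ReflTransGen r v b) := by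
  induction h with
  | single h =>
    rcases h with h | ⟨rfl, rfl⟩
    · exact .inl (.single h)
    · exact .inr ⟨.refl, .refl⟩
  | tail _ h ih =>
    rcases h with h | ⟨rfl, rfl⟩
    · exact ih.imp (·.tail h) (And.imp_right (·.tail h))
    · exact .inr ⟨ih.elim id And.left, .refl⟩

theorem Acyclic.sup_singleEdge {r : X → X → Prop} {u v : X} (hr : Acyclic r)
    (hvu : ¬ ReflTransGen r v u) : Acyclic (r ⊔ singleEdge u v) := by
  intro a b hab hba
  rcases transGen_sup_singleEdge hab with hab | ⟨hau, hvb⟩ <;>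
    rcases transGen_sup_singleEdge hba with hba | ⟨hbu, hva⟩
  · rcases reflTransGen_iff_eq_or_transGen.mp hab with rfl | hab
    · rfl
    rcases reflTransGen_iff_eq_or_transGen.mp hba with rfl | hba
    · rfl
    exact hr a b hab hba
  · exact absurd (hva.trans (hab.trans hbu)) hvu
  · exact absurd (hvb.trans (hba.trans hau)) hvu
  · exact absurd (hvb.trans hbu) hvu

end Acyclic

theorem relC_eq_relA_sup {X : Type*} (x y z : X) : relC x y z = relA x y ⊔ singleEdge x z := by
  funext p q
  simp only [relC, relA, singleEdge, Pi.sup_apply, sup_Prop_eq, or_assoc]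

theorem relD_eq_relA_sup {X : Type*} (x y z : X) : relD x y z = relA x y ⊔ singleEdge z y := by
  funext p q
  simp only [relD, relA, singleEdge, Pi.sup_apply, sup_Prop_eq, or_assoc]

theorem stmt8_general {X : Type*} (x y z : X)
    (hxy : x ≠ y)
    (s : X → X → Prop) :
    Compatible (relA x y) s ↔ (Compatible (relC x y z) s ∨ Compatible (relD x y z) s) := by
  constructor
  · intro hA
    rw [compatible_iff_acyclic_sup] at hA
    by_contra! hCD
    have hzx : ReflTransGen (relA x y ⊔ s) z x := by
      by_contra h
      apply hCD.1
      rw [compatible_iff_acyclic_sup, relC_eq_relA_sup, sup_right_comm]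
      exact hA.sup_singleEdge h
    have hyz : ReflTransGen (relA x y ⊔ s) y z := by
      by_contra h
      apply hCD.2
      rw [compatible_iff_acyclic_sup, relD_eq_relA_sup, sup_right_comm]
      exact hA.sup_singleEdge h
    have hyx : TransGen (relA x y ⊔ s) y x :=
      (reflTransGen_iff_eq_or_transGen.mp (hyz.trans hzx)).resolve_left hxy
    exact hxy (hA x y (.single (.inl (.inr ⟨rfl, rfl⟩))) hyx)
  · rintro (hC | hD)
    · exact hC.mono_left (relC_eq_relA_sup x y z ▸ le_sup_left)
    · exact hD.mono_left (relD_eq_relA_sup x y z ▸ le_sup_left)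

theorem stmt8 {X : Type*} (x y z : X)
    (hxy : x ≠ y) (hxz : x ≠ z) (hyz : y ≠ z)
    (hcover : ∀ w : X, w = x ∨ w = y ∨ w = z)
    (s : X → X → Prop) (hs : IsPartialOrder X s) :
    Compatible (relA x y) s ↔ (Compatible (relC x y z) s ∨ Compatible (relD x y z) s) :=
  stmt8_general x y z hxy s
end

section
/- Step 2 of the three-point splitting identity: with b = [x<z<y], c = [x<y, x<z], d = [x<y, z<y] as partial orders on {x,y,z}, a partial order s on {x,y,z} is compatible with b if and only if s is compatible with both c and d. -/
namespace Compatible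

variable {X : Type*} {r r' s : X → X → Prop}

theorem mono_left_s9 (hrr' : r ≤ r') (hc : Compatible r' s) : Compatible r s :=
  fun a b hab hba =>
    hc a b (hab.mono (fun _ _ => Or.imp_left (hrr' _ _)) _ _)
      (hba.mono (fun _ _ => Or.imp_left (hrr' _ _)) _ _)

theorem eq_of_rel_of_rel_swap (hc : Compatible r s) {a b : X} (hr : r a b) (hs : s b a) :
    a = b :=
  hc a b (.single (.inl hr)) (.single (.inr hs))

theorem of_le [IsTrans X r] (hr : ∀ ⦃a b⦄, r a b → r b a → a = b) (hsr : s ≤ r) :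
    Compatible r s :=
  fun a b hab hba =>
    have hle : (fun u v => r u v ∨ s u v) ≤ r := fun u v => Or.rec id (hsr u v)
    hr (Relation.transGen_minimal hle a b hab) (Relation.transGen_minimal hle b a hba)

end Compatible

section ThreePoints

variable {X : Type*} {x y z : X}

instance relB.isTrans : IsTrans X (relB x y z) := by
  constructor
  unfold relB
  rintro a b c (rfl | ⟨rfl, rfl⟩ | ⟨rfl, rfl⟩ | ⟨rfl, rfl⟩)
    (h | ⟨h, rfl⟩ | ⟨h, rfl⟩ | ⟨h, rfl⟩) <;> tauto

theorem relB_antisymm (hxy : x ≠ y) (hxz : x ≠ z) (hyz : y ≠ z) ⦃a b : X⦄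
    (hab : relB x y z a b) (hba : relB x y z b a) : a = b := by
  unfold relB at hab hba
  rcases hab with rfl | ⟨rfl, rfl⟩ | ⟨rfl, rfl⟩ | ⟨rfl, rfl⟩ <;> tauto

theorem relC_le_relB : relC x y z ≤ relB x y z := by
  unfold relC relB
  tauto

theorem relD_le_relB : relD x y z ≤ relB x y z := by
  unfold relD relB
  tauto

theorem le_relB_of_not_rel (hcover : ∀ w : X, w = x ∨ w = y ∨ w = z) {s : X → X → Prop}
    (hyx : ¬ s y x) (hzx : ¬ s z x) (hyz : ¬ s y z) : s ≤ relB x y z := by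
  intro u v h
  unfold relB
  rcases hcover u with rfl | rfl | rfl <;> rcases hcover v with rfl | rfl | rfl <;> tauto

end ThreePoints

theorem stmt9_general {X : Type*} (x y z : X)
    (hxy : x ≠ y) (hxz : x ≠ z) (hyz : y ≠ z)
    (hcover : ∀ w : X, w = x ∨ w = y ∨ w = z)
    (s : X → X → Prop) :
    Compatible (relB x y z) s ↔ (Compatible (relC x y z) s ∧ Compatible (relD x y z) s) := by
  refine ⟨fun hB => ⟨hB.mono_left_s9 relC_le_relB, hB.mono_left_s9 relD_le_relB⟩, ?_⟩
  rintro ⟨hC, hD⟩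
  have hsyx : ¬ s y x := fun h => hxy (hC.eq_of_rel_of_rel_swap (Or.inr (Or.inl ⟨rfl, rfl⟩)) h)
  have hszx : ¬ s z x := fun h => hxz (hC.eq_of_rel_of_rel_swap (Or.inr (Or.inr ⟨rfl, rfl⟩)) h)
  have hsyz : ¬ s y z :=
    fun h => hyz (hD.eq_of_rel_of_rel_swap (Or.inr (Or.inr ⟨rfl, rfl⟩)) h).symm
  exact .of_le (relB_antisymm hxy hxz hyz) (le_relB_of_not_rel hcover hsyx hszx hsyz)

theorem stmt9 {X : Type*} (x y z : X)
    (hxy : x ≠ y) (hxz : x ≠ z) (hyz : y ≠ z)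
    (hcover : ∀ w : X, w = x ∨ w = y ∨ w = z)
    (s : X → X → Prop) (hs : IsPartialOrder X s) :
    Compatible (relB x y z) s ↔ (Compatible (relC x y z) s ∧ Compatible (relD x y z) s) :=
  stmt9_general x y z hxy hxz hyz hcover s
end

section
/- Conversely, if S is a commutative semiring such that on every finite set X, every partial order is observationally equivalent to an S-linear combination of total orders (with respect to the compatibility pairing), then 1 + 1 = 1 in S. -/
/-! Take `X = Bool` and represent the discrete order `Eq`, up to observational equivalence, by
`∑ λᵢ tᵢ` with total orders `tᵢ`.
Every partial order is compatible with `Eq`, so pairing with `Eq`, `≤` and `≥` gives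
`∑ λᵢ ⟨tᵢ, s⟩ = 1` for each of them. A total order on `Bool` is compatible with `Eq` and
with exactly one of `≤`, `≥`, hence `1 + 1 = ∑ λᵢ (⟨tᵢ, ≤⟩ + ⟨tᵢ, ≥⟩) = ∑ λᵢ ⟨tᵢ, Eq⟩ = 1`. -/

instance isPartialOrder_eq (X : Type*) : IsPartialOrder X (@Eq X) where
  refl := Eq.refl
  trans _ _ _ := Eq.trans
  antisymm _ _ h _ := h

section Compatible

variable {X : Type*} {r s t : X → X → Prop}

theorem compatible_comm : Compatible r s ↔ Compatible s r := by
  simp only [Compatible, or_comm]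

theorem compatible_of_le [IsTrans X t] [Std.Antisymm t] (hr : r ≤ t) (hs : s ≤ t) :
    Compatible r s := by
  have hunion : ∀ a b, Relation.TransGen (fun u v => r u v ∨ s u v) a b → t a b := by
    intro a b hab
    rw [← Relation.transGen_eq_self (r := t)]
    exact Relation.TransGen.mono (fun u v huv => huv.elim (hr u v) (hs u v)) a b hab
  exact fun a b hab hba => antisymm (hunion a b hab) (hunion b a hba)

theorem compatible_iff_le [IsLinearOrder X t] : Compatible t s ↔ s ≤ t := by
  refine ⟨fun h a b hab => ?_, compatible_of_le le_rfl⟩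
  by_contra hnot
  have hba : t b a := (total_of t a b).resolve_left hnot
  obtain rfl := h a b (.single (.inr hab)) (.single (.inl hba))
  exact hnot (refl_of t a)

theorem compatible_eq_right [IsPartialOrder X r] : Compatible r Eq :=
  compatible_of_le le_rfl fun a _ h => h ▸ refl_of r a

theorem bracket_eq_left (S : Type*) [CommSemiring S] [IsPartialOrder X s] :
    bracket S Eq s = 1 :=
  if_pos (compatible_comm.mp compatible_eq_right)

theorem bracket_eq_right (S : Type*) [CommSemiring S] [IsPartialOrder X r] :
    bracket S r Eq = 1 :=
  if_pos compatible_eq_right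

end Compatible

theorem bracket_le_add_bracket_ge (S : Type*) [CommSemiring S] (t : Bool → Bool → Prop)
    [IsLinearOrder Bool t] : bracket S t (· ≤ ·) + bracket S t (· ≥ ·) = 1 := by
  have hle : Compatible t (· ≤ ·) ↔ t false true := by
    rw [compatible_iff_le]
    refine ⟨fun h => h false true (by decide), fun h a b hab => ?_⟩
    cases a <;> cases b <;> first | exact refl_of t _ | exact h | exact absurd hab (by decide)
  have hge : Compatible t (· ≥ ·) ↔ t true false := by
    rw [compatible_iff_le]
    refine ⟨fun h => h true false (by decide), fun h a b hab => ?_⟩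
    cases a <;> cases b <;> first | exact refl_of t _ | exact h | exact absurd hab (by decide)
  by_cases hft : t false true
  · have htf : ¬ t true false := fun htf => Bool.false_ne_true (antisymm hft htf)
    simp only [bracket, hle.mpr hft, hge, htf, if_true, if_false, add_zero]
  · have htf : t true false := (total_of t false true).resolve_left hft
    simp only [bracket, hle, hft, hge.mpr htf, if_true, if_false, zero_add]

theorem stmt13 {S : Type*} [CommSemiring S]
    (h : ∀ (X : Type) [Fintype X] (r : X → X → Prop), IsPartialOrder X r →
      ∃ (n : ℕ) (t : Fin n → (X → X → Prop)) (lam : Fin n → S),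
        (∀ i, IsLinearOrder X (t i)) ∧
        ∀ s : X → X → Prop, IsPartialOrder X s →
          bracket S r s = ∑ i, lam i * bracket S (t i) s) :
    (1 : S) + 1 = 1 := by
  obtain ⟨n, t, lam, ht, hrep⟩ := h Bool Eq inferInstance
  have hpair (s : Bool → Bool → Prop) [hs : IsPartialOrder Bool s] :
      ∑ i, lam i * bracket S (t i) s = 1 :=
    (hrep s hs).symm.trans (bracket_eq_left S)
  calc (1 : S) + 1
      = ∑ i, lam i * bracket S (t i) (· ≤ ·) + ∑ i, lam i * bracket S (t i) (· ≥ ·) := by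
        rw [hpair, hpair]
    _ = ∑ i, lam i * bracket S (t i) Eq := by
        rw [← Finset.sum_add_distrib]
        refine Finset.sum_congr rfl fun i _ => ?_
        have _ := ht i
        rw [← mul_add, bracket_le_add_bracket_ge, bracket_eq_right]
    _ = 1 := hpair Eq
end

section
/- Lemma on lifting along duplicated points: Let X be a finite set, a ≠ b in X, X' = X \ {b}. For s a partial order on X', define s_{a∼b} as s extended to X by making b behave exactly like a (b related to c iff a is, with a,b incomparable), and s_{a<b}, s_{a>b} by further adding (a,b) resp. (b,a). Then for any weak total order r on X: (i) if a <_r b then r is compatible with s_{a∼b} iff r is compatible with s_{a<b}, and r is incompatible with s_{a>b}; (ii) symmetrically if b <_r a; (iii) if a and b are incomparable in r, then compatibility with s_{a∼b}, s_{a<b}, s_{a>b} are all equivalent. -/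
/-- `s_{a∼b}`: the order `s` (on `X \ {b}`) extended to `X` by making the new point `b`
behave exactly like `a`, with `a` and `b` incomparable. -/
def extEquiv {X : Type*} (s : X → X → Prop) (a b : X) : X → X → Prop :=
  fun x y => s x y ∨ (y = b ∧ s x a ∧ x ≠ a ∧ x ≠ b) ∨ (x = b ∧ s a y ∧ y ≠ a ∧ y ≠ b)

/-- `s_{a<b} = s_{a∼b} ∪ {(a,b)}`. -/
def extLt {X : Type*} (s : X → X → Prop) (a b : X) : X → X → Prop :=
  fun x y => extEquiv s a b x y ∨ (x = a ∧ y = b)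

/-- `s_{a>b} = s_{a∼b} ∪ {(b,a)}`. -/
def extGt {X : Type*} (s : X → X → Prop) (a b : X) : X → X → Prop :=
  fun x y => extEquiv s a b x y ∨ (x = b ∧ y = a)

/-!
Collapsing `b` onto `a` maps every edge of `r ∪ s_{a<b}` to an edge or a loop of
`r ∪ s_{a∼b}`: for `s` this is how `s_{a∼b}` is built, and for `r` it is weak totality, since
when `a`, `b` are `r`-incomparable every `z ≠ b` with `z <_r b` satisfies `z <_r a`, and dually.
So a cycle of `r ∪ s_{a<b}` collapses to a cycle of `r ∪ s_{a∼b}`, unless it only identifies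
`a` with `b`; such a cycle runs from `b` to `a`, and its first step away from `b` is an edge out
of `a` to some `w ≠ a`, closing the cycle `a → w ⇝ a` of `r ∪ s_{a∼b}`. The case `s_{a>b}` is the
same argument for the reversed relations, and when `a <_r b` the edge `(a, b)` is already in `r`.
-/

namespace Relation

variable {X : Type*} {R S : X → X → Prop}

def IsAcyclic (R : X → X → Prop) : Prop :=
  ∀ x y, TransGen R x y → TransGen R y x → x = y

theorem IsAcyclic.mono (hRS : ∀ x y, R x y → S x y) (hS : IsAcyclic S) : IsAcyclic R :=
  fun x y hxy hyx => hS x y (TransGen.mono hRS _ _ hxy) (TransGen.mono hRS _ _ hyx)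

theorem isAcyclic_swap : IsAcyclic (Function.swap R) ↔ IsAcyclic R :=
  ⟨fun h x y hxy hyx => h x y (transGen_swap.2 hyx) (transGen_swap.2 hxy),
    fun h x y hxy hyx => h x y (transGen_swap.1 hyx) (transGen_swap.1 hxy)⟩

theorem IsAcyclic.eq_of_reflTransGen (hR : IsAcyclic R) {x y : X} (hxy : ReflTransGen R x y)
    (hyx : ReflTransGen R y x) : x = y := by
  rcases reflTransGen_iff_eq_or_transGen.1 hxy with rfl | hxy
  · rfl
  rcases reflTransGen_iff_eq_or_transGen.1 hyx with rfl | hyx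
  · rfl
  exact hR x y hxy hyx

theorem ReflTransGen.exists_ne_head {x y : X} (h : ReflTransGen R x y) (hne : x ≠ y) :
    ∃ w, w ≠ x ∧ R x w ∧ ReflTransGen R w y := by
  induction h with
  | refl => exact absurd rfl hne
  | @tail p q _ hpq ih =>
    by_cases hpx : p = x
    · subst hpx
      exact ⟨q, hne.symm, hpq, .refl⟩
    · obtain ⟨w, hwx, hxw, hwp⟩ := ih (Ne.symm hpx)
      exact ⟨w, hwx, hxw, hwp.tail hpq⟩

section Twin

open Classical Function

variable {a b : X}

theorem reflTransGen_update_of_twin (hab : a ≠ b)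
    (h_in : ∀ x, x ≠ b → R x b → R x a) (h_out : ∀ y, y ≠ b → R b y → R a y) {x y : X}
    (hxy : ReflTransGen (fun u v => R u v ∨ (u = a ∧ v = b)) x y) :
    ReflTransGen R (update id b a x) (update id b a y) := by
  refine ReflTransGen.lift' (update id b a) (fun u v huv => ?_) _ _ hxy
  show ReflTransGen R (update id b a u) (update id b a v)
  rcases huv with huv | ⟨rfl, rfl⟩
  · rcases eq_or_ne b u with rfl | hu <;> rcases eq_or_ne b v with rfl | hv
    · rfl
    · simpa [update_of_ne hv.symm] using ReflTransGen.single (h_out v hv.symm huv)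
    · simpa [update_of_ne hu.symm] using ReflTransGen.single (h_in u hu.symm huv)
    · simpa [update_of_ne hu.symm, update_of_ne hv.symm] using ReflTransGen.single huv
  · simpa [update_of_ne hab] using ReflTransGen.refl

theorem IsAcyclic.or_edge_of_twin (hR : IsAcyclic R) (hab : a ≠ b)
    (h_in : ∀ x, x ≠ b → R x b → R x a) (h_out : ∀ y, y ≠ b → R b y → R a y)
    (hba : ¬ R b a) : IsAcyclic (fun u v => R u v ∨ (u = a ∧ v = b)) := by
  have collapse {x y : X} := reflTransGen_update_of_twin (x := x) (y := y) hab h_in h_out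
  have no_path_ba : ¬ TransGen (fun u v => R u v ∨ (u = a ∧ v = b)) b a := by
    intro h
    obtain ⟨w, hwb, hstep, hwa⟩ := h.to_reflTransGen.exists_ne_head hab.symm
    have hbw : R b w := hstep.resolve_right fun h => hab h.1.symm
    have hwa : ReflTransGen R w a := by
      simpa [update_of_ne hwb, update_of_ne hab] using collapse hwa
    obtain rfl : w = a := hR.eq_of_reflTransGen hwa (.single (h_out w hwb hbw))
    exact hba hbw
  intro u v huv hvu
  have hπ := hR.eq_of_reflTransGen (collapse huv.to_reflTransGen) (collapse hvu.to_reflTransGen)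
  rcases eq_or_ne b u with rfl | hu <;> rcases eq_or_ne b v with rfl | hv
  · rfl
  · obtain rfl : a = v := by simpa [update_of_ne hv.symm] using hπ
    exact absurd huv no_path_ba
  · obtain rfl : u = a := by simpa [update_of_ne hu.symm] using hπ
    exact absurd hvu no_path_ba
  · simpa [update_of_ne hu.symm, update_of_ne hv.symm] using hπ

theorem IsAcyclic.or_edge_of_twin' (hR : IsAcyclic R) (hab : a ≠ b)
    (h_in : ∀ x, x ≠ b → R x b → R x a) (h_out : ∀ y, y ≠ b → R b y → R a y)
    (hnab : ¬ R a b) : IsAcyclic (fun u v => R u v ∨ (u = b ∧ v = a)) := by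
  have h := (isAcyclic_swap.2 hR).or_edge_of_twin (R := swap R) hab h_out h_in hnab
  exact isAcyclic_swap.1 (h.mono fun _ _ huv => huv.imp id And.symm)

end Twin

end Relation

open Relation

section Compatible

variable {X : Type*} {r s s' : X → X → Prop} {a b : X}

theorem Compatible.mono (hs : ∀ u v, s' u v → s u v) (h : Compatible r s) : Compatible r s' :=
  IsAcyclic.mono (fun u v => Or.imp_right (hs u v)) h

theorem not_compatible_of_rel_of_rel (hab : a ≠ b) (hr : r a b) (hs : s b a) :
    ¬ Compatible r s :=
  fun h => hab (h a b (.single (.inl hr)) (.single (.inr hs)))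

theorem compatible_or_edge_iff (hr : r a b) :
    Compatible r (fun u v => s u v ∨ (u = a ∧ v = b)) ↔ Compatible r s := by
  refine ⟨Compatible.mono fun _ _ => Or.inl, fun h => IsAcyclic.mono (fun u v huv => ?_) h⟩
  rcases huv with huv | huv | ⟨rfl, rfl⟩
  exacts [.inl huv, .inr huv, .inl hr]

theorem rel_left_of_weak
    (hweak : ∀ x y z : X, (r x y ∧ x ≠ y) → (r x z ∧ x ≠ z) ∨ (r z y ∧ z ≠ y))
    (hnab : ¬ r a b) {x : X} (hx : x ≠ b) (hxb : r x b) : r x a :=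
  ((hweak x b a ⟨hxb, hx⟩).resolve_right fun h => hnab h.1).1

theorem rel_right_of_weak
    (hweak : ∀ x y z : X, (r x y ∧ x ≠ y) → (r x z ∧ x ≠ z) ∨ (r z y ∧ z ≠ y))
    (hnba : ¬ r b a) {y : X} (hy : y ≠ b) (hby : r b y) : r a y :=
  ((hweak b y a ⟨hby, hy.symm⟩).resolve_left fun h => hnba h.1).1

theorem extEquiv_left_of_ne (hbiso : ∀ x : X, (s x b → x = b) ∧ (s b x → x = b)) {x : X}
    (hx : x ≠ b) (h : extEquiv s a b x b) : extEquiv s a b x a := by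
  rcases h with h | ⟨-, h, -⟩ | ⟨hxb, -⟩
  exacts [absurd ((hbiso x).1 h) hx, .inl h, absurd hxb hx]

theorem extEquiv_right_of_ne (hbiso : ∀ x : X, (s x b → x = b) ∧ (s b x → x = b)) {y : X}
    (hy : y ≠ b) (h : extEquiv s a b b y) : extEquiv s a b a y := by
  rcases h with h | ⟨hyb, -⟩ | ⟨-, h, -⟩
  exacts [absurd ((hbiso y).2 h) hy, absurd hyb hy, .inl h]

theorem extEquiv_incomparable (hab : a ≠ b)
    (hbiso : ∀ x : X, (s x b → x = b) ∧ (s b x → x = b)) :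
    ¬ extEquiv s a b a b ∧ ¬ extEquiv s a b b a := by
  constructor
  · rintro (h | ⟨-, -, h, -⟩ | ⟨h, -⟩)
    exacts [hab ((hbiso a).1 h), h rfl, hab h]
  · rintro (h | ⟨h, -⟩ | ⟨-, -, h, -⟩)
    exacts [hab ((hbiso a).2 h), hab h, h rfl]

theorem Compatible.extLt_and_extGt_of_incomparable (hab : a ≠ b)
    (hbiso : ∀ x : X, (s x b → x = b) ∧ (s b x → x = b))
    (hweak : ∀ x y z : X, (r x y ∧ x ≠ y) → (r x z ∧ x ≠ z) ∨ (r z y ∧ z ≠ y))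
    (hnab : ¬ r a b) (hnba : ¬ r b a) (h : Compatible r (extEquiv s a b)) :
    Compatible r (extLt s a b) ∧ Compatible r (extGt s a b) := by
  have h_in : ∀ x, x ≠ b → r x b ∨ extEquiv s a b x b → r x a ∨ extEquiv s a b x a :=
    fun x hx => Or.imp (rel_left_of_weak hweak hnab hx) (extEquiv_left_of_ne hbiso hx)
  have h_out : ∀ y, y ≠ b → r b y ∨ extEquiv s a b b y → r a y ∨ extEquiv s a b a y :=
    fun y hy => Or.imp (rel_right_of_weak hweak hnba hy) (extEquiv_right_of_ne hbiso hy)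
  obtain ⟨hEab, hEba⟩ := extEquiv_incomparable hab hbiso
  exact ⟨(IsAcyclic.or_edge_of_twin h hab h_in h_out (not_or.2 ⟨hnba, hEba⟩)).mono
      fun _ _ => or_assoc.2,
    (IsAcyclic.or_edge_of_twin' h hab h_in h_out (not_or.2 ⟨hnab, hEab⟩)).mono
      fun _ _ => or_assoc.2⟩

end Compatible

theorem stmt15_general {X : Type*} (a b : X) (hab : a ≠ b)
    (s : X → X → Prop)
    (hbiso : ∀ x : X, (s x b → x = b) ∧ (s b x → x = b))
    (r : X → X → Prop)
    (hweak : ∀ x y z : X, (r x y ∧ x ≠ y) → (r x z ∧ x ≠ z) ∨ (r z y ∧ z ≠ y)) :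
    ((r a b → ((Compatible r (extEquiv s a b) ↔ Compatible r (extLt s a b)) ∧
        ¬ Compatible r (extGt s a b))) ∧
     (r b a → ((Compatible r (extEquiv s a b) ↔ Compatible r (extGt s a b)) ∧
        ¬ Compatible r (extLt s a b))) ∧
     ((¬ r a b ∧ ¬ r b a) →
        ((Compatible r (extEquiv s a b) ↔ Compatible r (extLt s a b)) ∧
         (Compatible r (extEquiv s a b) ↔ Compatible r (extGt s a b))))) := by
  refine ⟨fun hrab => ⟨?_, ?_⟩, fun hrba => ⟨?_, ?_⟩, fun ⟨hnab, hnba⟩ => ⟨⟨?_, ?_⟩, ⟨?_, ?_⟩⟩⟩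
  · exact (compatible_or_edge_iff (s := extEquiv s a b) hrab).symm
  · exact not_compatible_of_rel_of_rel hab hrab (.inr ⟨rfl, rfl⟩)
  · exact (compatible_or_edge_iff (s := extEquiv s a b) hrba).symm
  · exact not_compatible_of_rel_of_rel hab.symm hrba (.inr ⟨rfl, rfl⟩)
  · exact fun h => (h.extLt_and_extGt_of_incomparable hab hbiso hweak hnab hnba).1
  · exact Compatible.mono fun _ _ => Or.inl
  · exact fun h => (h.extLt_and_extGt_of_incomparable hab hbiso hweak hnab hnba).2
  · exact Compatible.mono fun _ _ => Or.inl

theorem stmt15 {X : Type*} [Finite X] (a b : X) (hab : a ≠ b)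
    (s : X → X → Prop) (hs : IsPartialOrder X s)
    (hbiso : ∀ x : X, (s x b → x = b) ∧ (s b x → x = b))
    (r : X → X → Prop) (hr : IsPartialOrder X r)
    (hweak : ∀ x y z : X, (r x y ∧ x ≠ y) → (r x z ∧ x ≠ z) ∨ (r z y ∧ z ≠ y)) :
    ((r a b → ((Compatible r (extEquiv s a b) ↔ Compatible r (extLt s a b)) ∧
        ¬ Compatible r (extGt s a b))) ∧
     (r b a → ((Compatible r (extEquiv s a b) ↔ Compatible r (extGt s a b)) ∧
        ¬ Compatible r (extLt s a b))) ∧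
     ((¬ r a b ∧ ¬ r b a) →
        ((Compatible r (extEquiv s a b) ↔ Compatible r (extLt s a b)) ∧
         (Compatible r (extEquiv s a b) ↔ Compatible r (extGt s a b))))) :=
  stmt15_general a b hab s hbiso r hweak
end

section
/- Let S be a commutative ring of characteristic zero in which every nonzero integer is invertible (e.g., a ℚ-algebra). For every finite set X, the weak total orders on X form a basis of the quotient of the free S-module on partial orders of X by the submodule Z(X) = {u : ⟨u,s⟩ = 0 for all partial orders s}, where ⟨·,·⟩ is the bilinear compatibility pairing. -/
/-- A weak total order: a partial order in which `x < y` implies `x < z` or `z < y`. -/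
def IsWeakTotalOrder (X : Type*) (r : X → X → Prop) : Prop :=
  IsPartialOrder X r ∧
    ∀ x y z : X, (r x y ∧ x ≠ y) → (r x z ∧ x ≠ z) ∨ (r z y ∧ z ≠ y)

/-!
A weak total order `t` is an ordered set partition; give it the sign
`ε(t) = (-1) ^ (|X| - #blocks)`. Deletion–contraction on an incomparable pair `x, y` (a weak
total order extending a preorder `ρ` puts `x` below, above, or level with `y`) shows that the
signed count of the weak total orders strictly extending a preorder `ρ` is
`(-1) ^ (|X| - #classes of ρ)`. Applied to the preorder generated by `r ∪ s`, which is a partial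
order exactly when `r` and `s` are compatible, this gives `⟨r, s⟩ = ∑_{t ⊇ r, s} ε(t)`, i.e.
`⟨r, ·⟩ = ∑_{t ⊇ r} ε(t) [· ⊆ t]`. For weak total orders `r` this system is triangular for
inclusion with diagonal `±1`, so it can be inverted: the indicators `[· ⊆ t]`, hence all the
`⟨r, ·⟩`, lie in the span of the `⟨t, ·⟩`, which are linearly independent.
-/

theorem Nat.card_eq_card_add_one_of_injOn_compl {α β : Type*} [Finite α] {f : α → β}
    (hf : Function.Surjective f) {u v : α} (huv : u ≠ v) (hfuv : f u = f v)
    (hinj : Set.InjOn f {v}ᶜ) : Nat.card α = Nat.card β + 1 := by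
  have himage : f '' {v}ᶜ = Set.univ := by
    refine Set.eq_univ_of_forall fun b => ?_
    obtain ⟨a, rfl⟩ := hf b
    by_cases ha : a = v
    · exact ⟨u, huv, ha ▸ hfuv⟩
    · exact ⟨a, ha, rfl⟩
  rw [← Set.ncard_univ β, ← himage, hinj.ncard_image, ← Set.ncard_univ α,
    Set.compl_eq_univ_sdiff, Set.ncard_sdiff_singleton_add_one (Set.mem_univ v)]

section Triangular

open Finset

open scoped Classical

variable {α M : Type*} [PartialOrder α] [Fintype α]

theorem eq_zero_of_forall_sum_ge_eq_zero [AddCommMonoid M] {f : α → M}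
    (h : ∀ x, ∑ y with x ≤ y, f y = 0) : f = 0 := by
  funext x
  induction x using WellFoundedGT.induction with
  | _ x ih =>
  rw [Pi.zero_apply, ← h x, sum_eq_single_of_mem x (by simp) fun y hy hyx =>
    ih y (lt_of_le_of_ne (mem_filter.1 hy).2 (Ne.symm hyx))]

theorem eq_zero_of_forall_sum_le_eq_zero [AddCommMonoid M] {f : α → M}
    (h : ∀ x, ∑ y with y ≤ x, f y = 0) : f = 0 :=
  eq_zero_of_forall_sum_ge_eq_zero (α := αᵒᵈ) h

theorem mem_span_of_forall_eq_sum_ge {S : Type*} [Ring S] [AddCommGroup M] [Module S M]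
    {v e : α → M} {c : α → S} (hc : ∀ x, IsUnit (c x))
    (hv : ∀ x, v x = ∑ y with x ≤ y, c y • e y) (x : α) :
    e x ∈ Submodule.span S (Set.range v) := by
  induction x using WellFoundedGT.induction with
  | _ x ih =>
  have hx : c x • e x = v x - ∑ y ∈ ({y | x ≤ y} : Finset α).erase x, c y • e y := by
    rw [hv x, ← add_sum_erase _ _ (mem_filter.2 ⟨mem_univ x, le_rfl⟩), add_sub_cancel_right]
  obtain ⟨u, hu⟩ := hc x
  rw [← Submodule.smul_mem_iff' _ u, Units.smul_def, hu, hx]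
  refine sub_mem (Submodule.subset_span ⟨x, rfl⟩) (sum_mem fun y hy => ?_)
  rw [mem_erase, mem_filter] at hy
  exact Submodule.smul_mem _ _ (ih y (lt_of_le_of_ne hy.2.2 (Ne.symm hy.1)))

end Triangular

namespace WeakTotalOrderBasis

open Finset Relation

open scoped Classical

variable {X : Type*}

structure IsTotalPreorder (L : X → X → Prop) : Prop where
  trans : ∀ a b c, L a b → L b c → L a c
  total : ∀ a b, L a b ∨ L b a

theorem IsTotalPreorder.refl {L : X → X → Prop} (hL : IsTotalPreorder L) (a : X) : L a a :=
  (hL.total a a).elim id id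

/-- For a weak total order `t`, `coRel t a b` says that the level of `a` is at most that of `b`. -/
def coRel (R : X → X → Prop) (a b : X) : Prop := a = b ∨ ¬ R b a

theorem coRel_coRel {R : X → X → Prop} (hR : ∀ a, R a a) : coRel (coRel R) = R := by
  funext a b
  by_cases h : a = b
  · subst h
    simp [coRel, hR]
  · simp [coRel, h, Ne.symm h]

theorem IsWeakTotalOrder.isTotalPreorder_coRel {t : X → X → Prop} (ht : IsWeakTotalOrder X t) :
    IsTotalPreorder (coRel t) where
  trans a b c hab hbc := by
    by_contra! h
    simp only [coRel, not_or, not_not] at hab hbc h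
    rcases ht.2 c a b ⟨h.2, Ne.symm h.1⟩ with h' | h' <;> grind
  total a b := by
    by_contra! h
    simp only [coRel, not_or, not_not] at h
    exact h.1.1 (ht.1.antisymm _ _ h.2.2 h.1.2)

theorem IsTotalPreorder.isWeakTotalOrder_coRel {L : X → X → Prop} (hL : IsTotalPreorder L) :
    IsWeakTotalOrder X (coRel L) := by
  have := hL.trans
  have := hL.total
  refine ⟨{ refl := fun a => Or.inl rfl, trans := ?_, antisymm := ?_ }, ?_⟩ <;> unfold coRel <;>
    grind

abbrev WeakTotalOrders (X : Type*) := {t : X → X → Prop // IsWeakTotalOrder X t}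

/-- `L` contains `ρ`, and every pair strictly ordered by `ρ` is strictly ordered by `L`. -/
def ExtendsStrictly (ρ L : X → X → Prop) : Prop :=
  ∀ a b, ρ a b → L a b ∧ (L b a → ρ b a)

theorem extendsStrictly_self (ρ : X → X → Prop) : ExtendsStrictly ρ ρ :=
  fun _ _ h => ⟨h, id⟩

theorem ExtendsStrictly.eq_of_total {ρ L : X → X → Prop} (h : ExtendsStrictly ρ L)
    (hρ : ∀ a b, ρ a b ∨ ρ b a) : L = ρ := by
  funext a b
  refine propext ⟨fun hab => ?_, fun hab => (h a b hab).1⟩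
  exact (hρ a b).elim id fun hba => (h b a hba).2 hab

theorem extendsStrictly_coRel_iff {r t : X → X → Prop} (hr : IsPartialOrder X r)
    (ht : IsPartialOrder X t) : ExtendsStrictly r (coRel t) ↔ r ≤ t := by
  have := hr.refl
  have := hr.antisymm
  have := ht.refl
  have := ht.antisymm
  constructor
  · intro h a b hab
    have := h a b hab
    unfold coRel at this
    grind
  · intro h a b hab
    have := h a b hab
    unfold coRel
    grind

theorem extendsStrictly_coRel_iff_eq {ρ t : X → X → Prop} (hρ : IsTotalPreorder ρ)
    (ht : ∀ a, t a a) : ExtendsStrictly ρ (coRel t) ↔ t = coRel ρ := by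
  constructor
  · intro h
    rw [← h.eq_of_total hρ.total, coRel_coRel ht]
  · rintro rfl
    rw [coRel_coRel hρ.refl]
    exact extendsStrictly_self ρ

/-- `addRel ρ x y` and `glueRel ρ x y` are the preorders generated by `ρ` together with `x ≤ y`,
respectively with `x ≤ y` and `y ≤ x`. -/
def addRel (ρ : X → X → Prop) (x y a b : X) : Prop := ρ a b ∨ (ρ a x ∧ ρ y b)

def glueRel (ρ : X → X → Prop) (x y a b : X) : Prop := addRel ρ x y a b ∨ addRel ρ y x a b

section DeletionContraction

variable {ρ L : X → X → Prop} {x y : X} (hρ : IsPreorder X ρ)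
include hρ

theorem isPreorder_addRel : IsPreorder X (addRel ρ x y) := by
  have := hρ.trans
  exact { refl := fun a => Or.inl (hρ.refl a), trans := by unfold addRel; grind }

theorem isPreorder_glueRel : IsPreorder X (glueRel ρ x y) := by
  have := hρ.trans
  exact { refl := fun a => Or.inl (Or.inl (hρ.refl a)), trans := by unfold glueRel addRel; grind }

theorem extendsStrictly_addRel_iff (hyx : ¬ ρ y x) (hL : IsTotalPreorder L) :
    ExtendsStrictly (addRel ρ x y) L ↔ ExtendsStrictly ρ L ∧ ¬ L y x := by
  have := hρ.refl
  have := hρ.trans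
  have := hL.trans
  have := hL.total
  unfold ExtendsStrictly addRel
  grind

theorem extendsStrictly_glueRel_iff (hxy : ¬ ρ x y) (hyx : ¬ ρ y x) (hL : IsTotalPreorder L) :
    ExtendsStrictly (glueRel ρ x y) L ↔ ExtendsStrictly ρ L ∧ L x y ∧ L y x := by
  have := hρ.refl
  have := hρ.trans
  have := hL.trans
  have := hL.total
  unfold ExtendsStrictly glueRel addRel
  grind

theorem antisymmRel_addRel (hyx : ¬ ρ y x) : AntisymmRel (addRel ρ x y) = AntisymmRel ρ := by
  have := hρ.trans
  funext a b
  unfold AntisymmRel addRel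
  grind

theorem antisymmRel_glueRel_iff (hxy : ¬ ρ x y) (hyx : ¬ ρ y x) (a b : X) :
    AntisymmRel (glueRel ρ x y) a b ↔ AntisymmRel ρ a b ∨
      (AntisymmRel ρ a x ∧ AntisymmRel ρ b y) ∨ (AntisymmRel ρ a y ∧ AntisymmRel ρ b x) := by
  have := hρ.trans
  unfold AntisymmRel glueRel addRel
  grind

theorem ite_extendsStrictly_eq_add {S : Type*} [AddMonoid S] (hxy : ¬ ρ x y) (hyx : ¬ ρ y x)
    (hL : IsTotalPreorder L) (c : S) :
    (if ExtendsStrictly ρ L then c else 0) =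
      (if ExtendsStrictly (addRel ρ x y) L then c else 0) +
        (if ExtendsStrictly (addRel ρ y x) L then c else 0) +
        (if ExtendsStrictly (glueRel ρ x y) L then c else 0) := by
  rw [extendsStrictly_addRel_iff hρ hyx hL, extendsStrictly_addRel_iff hρ hxy hL,
    extendsStrictly_glueRel_iff hρ hxy hyx hL]
  have := hL.total x y
  split_ifs <;> grind

end DeletionContraction

noncomputable def numClasses (ρ : X → X → Prop) : ℕ := Nat.card (Quot (AntisymmRel ρ))

theorem quot_mk_antisymmRel_eq_iff {ρ : X → X → Prop} (hρ : IsPreorder X ρ) {a b : X} :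
    Quot.mk (AntisymmRel ρ) a = Quot.mk (AntisymmRel ρ) b ↔ AntisymmRel ρ a b :=
  Quot.eq.trans <| Equivalence.eqvGen_iff
    ⟨fun a => ⟨hρ.refl a, hρ.refl a⟩, fun h => ⟨h.2, h.1⟩,
      fun h h' => ⟨hρ.trans _ _ _ h.1 h'.1, hρ.trans _ _ _ h'.2 h.2⟩⟩

theorem numClasses_of_antisymm [Finite X] {ρ : X → X → Prop} (hρ : IsPreorder X ρ)
    (h : ∀ a b, ρ a b → ρ b a → a = b) : numClasses ρ = Nat.card X :=
  (Nat.card_congr <| Equiv.ofBijective _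
    ⟨fun a b hab => h a b ((quot_mk_antisymmRel_eq_iff hρ).1 hab).1
      ((quot_mk_antisymmRel_eq_iff hρ).1 hab).2, Quot.mk_surjective⟩).symm

theorem numClasses_addRel {ρ : X → X → Prop} {x y : X} (hρ : IsPreorder X ρ) (hyx : ¬ ρ y x) :
    numClasses (addRel ρ x y) = numClasses ρ := by
  rw [numClasses, antisymmRel_addRel hρ hyx, numClasses]

theorem numClasses_glueRel [Finite X] {ρ : X → X → Prop} {x y : X} (hρ : IsPreorder X ρ)
    (hxy : ¬ ρ x y) (hyx : ¬ ρ y x) : numClasses (glueRel ρ x y) + 1 = numClasses ρ := by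
  have hglue := antisymmRel_glueRel_iff hρ hxy hyx
  have hglue_eq_iff (a b : X) :=
    quot_mk_antisymmRel_eq_iff (isPreorder_glueRel hρ (x := x) (y := y)) (a := a) (b := b)
  refine (Nat.card_eq_card_add_one_of_injOn_compl
    (f := Quot.map id fun a b h => (hglue a b).2 (Or.inl h))
    (u := Quot.mk _ x) (v := Quot.mk _ y) ?_ ?_ ?_ ?_).symm
  · rintro ⟨a⟩
    exact ⟨Quot.mk _ a, rfl⟩
  · rw [Ne, quot_mk_antisymmRel_eq_iff hρ]
    exact fun h => hxy h.1
  · refine (hglue_eq_iff x y).2 ((hglue x y).2 ?_)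
    exact Or.inr (Or.inl ⟨⟨hρ.refl x, hρ.refl x⟩, ⟨hρ.refl y, hρ.refl y⟩⟩)
  · rintro ⟨a⟩ ha ⟨b⟩ hb hab
    simp only [Set.mem_compl_iff, Set.mem_singleton_iff, quot_mk_antisymmRel_eq_iff hρ] at ha hb
    rw [quot_mk_antisymmRel_eq_iff hρ]
    have := (hglue_eq_iff a b).1 hab
    grind

/-- `(-1) ^ (|X| - numClasses ρ)`, written without truncated subtraction. -/
noncomputable def classSign (S : Type*) [CommRing S] (ρ : X → X → Prop) : S :=
  (-1) ^ (Nat.card X + numClasses ρ)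

theorem isUnit_classSign (S : Type*) [CommRing S] (ρ : X → X → Prop) : IsUnit (classSign S ρ) :=
  isUnit_neg_one.pow _

theorem sum_classSign_extendsStrictly [Fintype X] (S : Type*) [CommRing S] {ρ : X → X → Prop}
    (hρ : IsPreorder X ρ) :
    ∑ t : WeakTotalOrders X with ExtendsStrictly ρ (coRel t.1), classSign S (coRel t.1) =
      classSign S ρ := by
  induction ρ using WellFoundedGT.induction with
  | _ ρ ih =>
  by_cases htot : ∀ a b, ρ a b ∨ ρ b a
  · have hL : IsTotalPreorder ρ := ⟨hρ.trans, htot⟩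
    have hfilter : ({t : WeakTotalOrders X | ExtendsStrictly ρ (coRel t.1)} : Finset _) =
        {⟨coRel ρ, hL.isWeakTotalOrder_coRel⟩} := by
      ext t
      simp [extendsStrictly_coRel_iff_eq hL t.2.1.refl, Subtype.ext_iff]
    rw [hfilter, sum_singleton, coRel_coRel hρ.refl]
  push Not at htot
  obtain ⟨x, y, hxy, hyx⟩ := htot
  have hlt : ∀ σ : X → X → Prop, (∀ a b, ρ a b → σ a b) → σ x y ∨ σ y x → ρ < σ :=
    fun σ hle hσ => lt_of_le_not_ge hle fun h => hσ.elim (fun h' => hxy (h x y h'))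
      fun h' => hyx (h y x h')
  rw [sum_filter, sum_congr rfl fun t _ => ite_extendsStrictly_eq_add hρ hxy hyx
      (IsWeakTotalOrder.isTotalPreorder_coRel t.2) _, sum_add_distrib, sum_add_distrib,
    ← sum_filter, ← sum_filter, ← sum_filter,
    ih (addRel ρ x y) (hlt _ (fun _ _ => Or.inl) (Or.inl (Or.inr ⟨hρ.refl x, hρ.refl y⟩)))
      (isPreorder_addRel hρ),
    ih (addRel ρ y x) (hlt _ (fun _ _ => Or.inl) (Or.inr (Or.inr ⟨hρ.refl y, hρ.refl x⟩)))
      (isPreorder_addRel hρ),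
    ih (glueRel ρ x y) (hlt _ (fun _ _ h => Or.inl (Or.inl h))
      (Or.inl (Or.inl (Or.inr ⟨hρ.refl x, hρ.refl y⟩)))) (isPreorder_glueRel hρ),
    classSign, classSign, classSign, classSign, numClasses_addRel hρ hyx,
    numClasses_addRel hρ hxy, ← numClasses_glueRel hρ hxy hyx]
  ring

section Compatibility

variable {r s L : X → X → Prop}

theorem IsTotalPreorder.le_of_reflTransGen {R : X → X → Prop} (hL : IsTotalPreorder L)
    (hR : ∀ u v, R u v → L u v) {a b : X} (h : ReflTransGen R a b) : L a b := by
  induction h with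
  | refl => exact hL.refl a
  | tail _ huv ih => exact hL.trans _ _ _ ih (hR _ _ huv)

theorem IsTotalPreorder.eq_of_reflTransGen {R : X → X → Prop} (hL : IsTotalPreorder L)
    (hR : ∀ u v, R u v → L u v ∧ (L v u → u = v)) {a b : X} (h : ReflTransGen R a b)
    (hba : L b a) : a = b := by
  induction h with
  | refl => rfl
  | @tail c d hac hcd ih =>
    have hdc : L d c :=
      hL.trans _ _ _ hba (hL.le_of_reflTransGen (fun u v h => (hR u v h).1) hac)
    obtain rfl := (hR c d hcd).2 hdc
    exact ih hba

theorem ExtendsStrictly.step (hr : IsPartialOrder X r) (h : ExtendsStrictly r L) {u v : X}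
    (huv : r u v) : L u v ∧ (L v u → u = v) :=
  ⟨(h u v huv).1, fun hvu => hr.antisymm _ _ huv ((h u v huv).2 hvu)⟩

theorem ExtendsStrictly.of_le {ρ : X → X → Prop} (h : ExtendsStrictly ρ L) (hr : ∀ a, r a a)
    (hle : r ≤ ρ) (hρ : ∀ a b, ρ a b → ρ b a → a = b) : ExtendsStrictly r L := fun a b hab =>
  ⟨(h a b (hle a b hab)).1, fun hba => hρ a b (hle a b hab) ((h a b (hle a b hab)).2 hba) ▸ hr a⟩

theorem Compatible.eq_of_reflTransGen (hc : Compatible r s) {a b : X}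
    (hab : ReflTransGen (fun u v => r u v ∨ s u v) a b)
    (hba : ReflTransGen (fun u v => r u v ∨ s u v) b a) : a = b := by
  rcases reflTransGen_iff_eq_or_transGen.1 hab with rfl | hab
  · rfl
  rcases reflTransGen_iff_eq_or_transGen.1 hba with rfl | hba
  · rfl
  exact hc a b hab hba

section

variable (hr : IsPartialOrder X r) (hs : IsPartialOrder X s) (hrL : ExtendsStrictly r L)
  (hsL : ExtendsStrictly s L)
include hr hs hrL hsL

theorem ExtendsStrictly.step_or {u v : X} (huv : r u v ∨ s u v) : L u v ∧ (L v u → u = v) :=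
  huv.elim (hrL.step hr) (hsL.step hs)

variable (hL : IsTotalPreorder L)
include hL

theorem compatible_of_extendsStrictly : Compatible r s := fun _ _ hab hba =>
  hL.eq_of_reflTransGen (fun _ _ => hrL.step_or hr hs hsL) hab.to_reflTransGen
    (hL.le_of_reflTransGen (fun _ _ h => (hrL.step_or hr hs hsL h).1) hba.to_reflTransGen)

theorem extendsStrictly_reflTransGen :
    ExtendsStrictly (ReflTransGen fun u v => r u v ∨ s u v) L := fun _ _ hab =>
  ⟨hL.le_of_reflTransGen (fun _ _ h => (hrL.step_or hr hs hsL h).1) hab,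
    fun hba => hL.eq_of_reflTransGen (fun _ _ => hrL.step_or hr hs hsL) hab hba ▸ .refl⟩

end

end Compatibility

theorem bracket_eq_sum_classSign [Fintype X] (S : Type*) [CommRing S] {r s : X → X → Prop}
    (hr : IsPartialOrder X r) (hs : IsPartialOrder X s) :
    bracket S r s = ∑ t : WeakTotalOrders X with r ≤ t.1 ∧ s ≤ t.1, classSign S (coRel t.1) := by
  have hle_iff (t : WeakTotalOrders X) : (r ≤ t.1 ∧ s ≤ t.1) ↔
      ExtendsStrictly r (coRel t.1) ∧ ExtendsStrictly s (coRel t.1) := by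
    rw [extendsStrictly_coRel_iff hr t.2.1, extendsStrictly_coRel_iff hs t.2.1]
  simp_rw [hle_iff]
  by_cases hc : Compatible r s
  · set ρ := ReflTransGen fun u v => r u v ∨ s u v
    have hρ : IsPreorder X ρ := { refl := fun _ => .refl, trans := fun _ _ _ => .trans }
    have hρ_antisymm : ∀ a b, ρ a b → ρ b a → a = b := fun _ _ => Compatible.eq_of_reflTransGen hc
    have hfilter (t : WeakTotalOrders X) :
        (ExtendsStrictly r (coRel t.1) ∧ ExtendsStrictly s (coRel t.1)) ↔
          ExtendsStrictly ρ (coRel t.1) :=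
      ⟨fun h => extendsStrictly_reflTransGen hr hs h.1 h.2
          (IsWeakTotalOrder.isTotalPreorder_coRel t.2),
        fun h => ⟨h.of_le hr.refl (fun _ _ h => .single (Or.inl h)) hρ_antisymm,
          h.of_le hs.refl (fun _ _ h => .single (Or.inr h)) hρ_antisymm⟩⟩
    rw [bracket, if_pos hc, filter_congr fun t _ => hfilter t, sum_classSign_extendsStrictly S hρ,
      classSign, numClasses_of_antisymm hρ hρ_antisymm]
    exact (Even.neg_one_pow ⟨_, rfl⟩).symm
  · rw [bracket, if_neg hc]
    refine (sum_eq_zero fun t ht => ?_).symm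
    rw [mem_filter] at ht
    exact (hc (compatible_of_extendsStrictly hr hs ht.2.1 ht.2.2
      (IsWeakTotalOrder.isTotalPreorder_coRel t.2))).elim

/-- The class of `r` modulo `Z(X)`: by the definition of `Z(X)`, the quotient module is the
span of these functionals on partial orders. -/
noncomputable def pairing (S : Type*) [CommSemiring S] (r : X → X → Prop) :
    {s : X → X → Prop // IsPartialOrder X s} → S :=
  fun s => bracket S r s.1

noncomputable def leIndicator (S : Type*) [CommSemiring S] (t : X → X → Prop) :
    {s : X → X → Prop // IsPartialOrder X s} → S :=
  fun s => if s.1 ≤ t then 1 else 0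

section Pairing

variable [Fintype X] (S : Type*) [CommRing S]

theorem pairing_eq_sum {r : X → X → Prop} (hr : IsPartialOrder X r) :
    pairing S r = ∑ t : WeakTotalOrders X with r ≤ t.1,
      classSign S (coRel t.1) • leIndicator S t.1 := by
  funext s
  simp only [pairing, bracket_eq_sum_classSign S hr s.2, Finset.sum_apply, Pi.smul_apply,
    leIndicator, smul_eq_mul, mul_ite, mul_one, mul_zero]
  rw [← sum_filter, filter_filter]

theorem pairing_mem_span {r : X → X → Prop} (hr : IsPartialOrder X r) :
    pairing S r ∈ Submodule.span S (Set.range fun t : WeakTotalOrders X => pairing S t.1) := by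
  have hind (t : WeakTotalOrders X) :
      leIndicator S t.1 ∈ Submodule.span S (Set.range fun t : WeakTotalOrders X => pairing S t.1) :=
    mem_span_of_forall_eq_sum_ge (fun t => isUnit_classSign S _) (fun t => pairing_eq_sum S t.2.1) t
  rw [pairing_eq_sum S hr]
  exact sum_mem fun t _ => Submodule.smul_mem _ _ (hind t)

theorem sum_smul_pairing (g : WeakTotalOrders X → S) :
    ∑ u, g u • pairing S u.1 =
      ∑ t, (classSign S (coRel t.1) * ∑ u with u ≤ t, g u) • leIndicator S t.1 := by
  calc ∑ u, g u • pairing S u.1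
      = ∑ u, ∑ t with u ≤ t, g u • classSign S (coRel t.1) • leIndicator S t.1 := by
        refine sum_congr rfl fun u _ => ?_
        rw [pairing_eq_sum S u.2.1, smul_sum]
        rfl
    _ = ∑ t, ∑ u with u ≤ t, g u • classSign S (coRel t.1) • leIndicator S t.1 :=
        sum_comm' (by simp)
    _ = _ := by
        refine sum_congr rfl fun t _ => ?_
        rw [mul_comm, mul_smul, sum_smul]

theorem linearIndependent_pairing :
    LinearIndependent S fun t : WeakTotalOrders X => pairing S t.1 := by
  rw [Fintype.linearIndependent_iff]
  intro g hg
  have hsum : ∀ t : WeakTotalOrders X, ∑ u with u ≤ t, g u = 0 := by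
    have := eq_zero_of_forall_sum_ge_eq_zero
      (f := fun t : WeakTotalOrders X => classSign S (coRel t.1) * ∑ u with u ≤ t, g u)
      fun t₀ => by
        have := congrFun ((sum_smul_pairing S g).symm.trans hg) ⟨t₀.1, t₀.2.1⟩
        simpa [Finset.sum_apply, leIndicator, sum_filter] using this
    exact fun t => (isUnit_classSign S _).mul_right_eq_zero.1 (congrFun this t)
  exact congrFun (eq_zero_of_forall_sum_le_eq_zero hsum)

end Pairing

end WeakTotalOrderBasis

open WeakTotalOrderBasis

theorem stmt16_general {X : Type*} [Finite X] {S : Type*} [CommRing S] :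
    -- generation: every partial order is observationally equivalent to a
    -- linear combination of weak total orders
    (∀ r : X → X → Prop, IsPartialOrder X r →
      ∃ (n : ℕ) (w : Fin n → (X → X → Prop)) (lam : Fin n → S),
        (∀ i, IsWeakTotalOrder X (w i)) ∧
        ∀ s : X → X → Prop, IsPartialOrder X s →
          bracket S r s = ∑ i, lam i * bracket S (w i) s) ∧
    -- linear independence of weak total orders modulo the kernel of the pairing
    (∀ (ι : Type) [Fintype ι] (w : ι → (X → X → Prop)), Function.Injective w →
      (∀ i, IsWeakTotalOrder X (w i)) → ∀ lam mu : ι → S,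
      (∀ s : X → X → Prop, IsPartialOrder X s →
        ∑ i, lam i * bracket S (w i) s = ∑ i, mu i * bracket S (w i) s) →
      lam = mu) := by
  classical
  have := Fintype.ofFinite X
  refine ⟨fun r hr => ?_, fun ι _ w hw hweak lam mu h => ?_⟩
  · obtain ⟨c, hc⟩ := (Submodule.mem_span_range_iff_exists_fun S).1 (pairing_mem_span S hr)
    let e := (Fintype.equivFin (WeakTotalOrders X)).symm
    refine ⟨_, fun i => (e i).1, fun i => c (e i), fun i => (e i).2, fun s hs => ?_⟩
    change pairing S r ⟨s, hs⟩ = _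
    rw [← hc, Finset.sum_apply, ← e.sum_comp]
    rfl
  · have hli := (linearIndependent_pairing S).comp (fun i => (⟨w i, hweak i⟩ : WeakTotalOrders X))
      fun i j hij => hw (congrArg Subtype.val hij)
    exact funext <| Fintype.linearIndependent_iffₛ.1 hli lam mu <| funext fun s => by
      simpa [Finset.sum_apply, pairing] using h s.1 s.2

theorem stmt16 {X : Type*} [Finite X] {S : Type*} [CommRing S] [CharZero S]
    (hinv : ∀ n : ℕ, n ≠ 0 → IsUnit (n : S)) :
    -- generation: every partial order is observationally equivalent to a
    -- linear combination of weak total orders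
    (∀ r : X → X → Prop, IsPartialOrder X r →
      ∃ (n : ℕ) (w : Fin n → (X → X → Prop)) (lam : Fin n → S),
        (∀ i, IsWeakTotalOrder X (w i)) ∧
        ∀ s : X → X → Prop, IsPartialOrder X s →
          bracket S r s = ∑ i, lam i * bracket S (w i) s) ∧
    -- linear independence of weak total orders modulo the kernel of the pairing
    (∀ (ι : Type) [Fintype ι] (w : ι → (X → X → Prop)), Function.Injective w →
      (∀ i, IsWeakTotalOrder X (w i)) → ∀ lam mu : ι → S,
      (∀ s : X → X → Prop, IsPartialOrder X s →
        ∑ i, lam i * bracket S (w i) s = ∑ i, mu i * bracket S (w i) s) →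
      lam = mu) :=
  stmt16_general
end

section
/- Generation part of the weak-total-order basis theorem: let S be a commutative ring, X a finite set. Every partial order r on X is congruent, modulo the kernel Z(X) of the compatibility pairing, to a ℤ-linear combination of weak total orders on X. Concretely, defining N(r) = {(a,b,c) : a <_r b, a ∥_r c, b ∥_r c}, if N(r) ≠ ∅ with witness (a,b,c) then r ≡ r∨[a<c] + r∨[c<b] − r∨[a<c<b] modulo Z(X), where r∨p denotes the join (transitive closure of union) of compatible orders; induction on |N(r)| terminates at weak total orders. -/
/-- `[a<c]`: the smallest partial order with `a < c`. -/
def pairRel {X : Type*} (a c : X) : X → X → Prop :=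
  fun u v => u = v ∨ (u = a ∧ v = c)

/-- `[a<c<b]`: the smallest partial order with `a < c` and `c < b`. -/
def chainRel {X : Type*} (a c b : X) : X → X → Prop :=
  fun u v => u = v ∨ (u = a ∧ v = c) ∨ (u = c ∧ v = b) ∨ (u = a ∧ v = b)

/-- The join of two orders: the reflexive-transitive closure of their union. -/
def joinRel {X : Type*} (r p : X → X → Prop) : X → X → Prop :=
  Relation.ReflTransGen (fun u v => r u v ∨ p u v)

/-!
With `R` the reachability relation of `r ∪ s`, a join `r ∨ p` is compatible with `s` iff `R`
stays acyclic after adding the edges of `p`. When `r ∪ s` is acyclic, adding `a → c` keeps it so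
iff `¬ R c a`, adding `c → b` iff `¬ R b c`, and adding both iff both hold; as `R a b`, the two
conditions cannot fail together, so the splitting identity becomes `1 + [P ∧ Q] = [P] + [Q]`
for `P ∨ Q`. Each of the three joins has fewer incomparable pairs than `r`, so splitting at
triples of `N(r)` terminates at the partial orders with `N(r) = ∅`, which are the weak total
orders.
-/

open Relation

section Closure

variable {α : Type*} {q p : α → α → Prop}

theorem ne_of_not_rel {r : α → α → Prop} [Std.Refl r] {a b : α} (h : ¬ r a b) : a ≠ b :=
  fun hab => h (hab ▸ refl a)

theorem Relation.antisymm_reflTransGen_iff_transGen :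
    Std.Antisymm (ReflTransGen q) ↔ Std.Antisymm (TransGen q) := by
  refine ⟨fun h => ⟨fun x y hxy hyx => h.antisymm x y hxy.to_reflTransGen hyx.to_reflTransGen⟩,
    fun h => ⟨fun x y hxy hyx => ?_⟩⟩
  rcases reflTransGen_iff_eq_or_transGen.mp hxy with rfl | hxy
  · rfl
  rcases reflTransGen_iff_eq_or_transGen.mp hyx with rfl | hyx
  · rfl
  exact h.antisymm x y hxy hyx

theorem Relation.antisymm_reflTransGen_of_le (hqp : q ≤ p)
    (h : Std.Antisymm (ReflTransGen p)) : Std.Antisymm (ReflTransGen q) :=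
  ⟨fun x y hxy hyx => h.antisymm x y (ReflTransGen.mono hqp _ _ hxy)
    (ReflTransGen.mono hqp _ _ hyx)⟩

theorem Relation.reflTransGen_reflTransGen_sup (q p : α → α → Prop) :
    ReflTransGen (ReflTransGen q ⊔ p) = ReflTransGen (q ⊔ p) :=
  le_antisymm
    (reflTransGen_closed (sup_le (ReflTransGen.mono le_sup_left)
      (le_sup_right.trans ReflTransGen.le_reflTransGen)))
    (ReflTransGen.mono (sup_le_sup_right ReflTransGen.le_reflTransGen p))

theorem Relation.isPartialOrder_reflTransGen_iff :
    IsPartialOrder α (ReflTransGen q) ↔ Std.Antisymm (ReflTransGen q) :=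
  ⟨fun h => h.toAntisymm, fun h => { toAntisymm := h }⟩

end Closure

section Edges

variable {α : Type*} {q : α → α → Prop} {a b c : α}

theorem reflTransGen_sup_pairRel_iff {x y : α} :
    ReflTransGen (q ⊔ pairRel a c) x y ↔
      ReflTransGen q x y ∨ ReflTransGen q x a ∧ ReflTransGen q c y := by
  refine ⟨fun h => ?_, ?_⟩
  · induction h with
    | refl => exact Or.inl .refl
    | tail _ step ih =>
      rcases step with hq | rfl | ⟨rfl, rfl⟩
      · exact ih.imp (·.tail hq) (And.imp_right (·.tail hq))
      · exact ih
      · exact Or.inr ⟨ih.elim id And.left, .refl⟩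
  · have hq : q ≤ q ⊔ pairRel a c := le_sup_left
    rintro (h | ⟨hxa, hcy⟩)
    · exact ReflTransGen.mono hq _ _ h
    · exact ((ReflTransGen.mono hq _ _ hxa).tail (Or.inr (Or.inr ⟨rfl, rfl⟩))).trans
        (ReflTransGen.mono hq _ _ hcy)

theorem antisymm_reflTransGen_sup_pairRel_iff (hq : Std.Antisymm (ReflTransGen q))
    (hac : a ≠ c) :
    Std.Antisymm (ReflTransGen (q ⊔ pairRel a c)) ↔ ¬ ReflTransGen q c a := by
  refine ⟨fun h hca => hac (h.antisymm a c ?_ ?_), fun hca => ⟨fun x y hxy hyx => ?_⟩⟩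
  · exact reflTransGen_sup_pairRel_iff.mpr (Or.inr ⟨.refl, .refl⟩)
  · exact reflTransGen_sup_pairRel_iff.mpr (Or.inl hca)
  rcases reflTransGen_sup_pairRel_iff.mp hxy with hxy | ⟨hxa, hcy⟩ <;>
    rcases reflTransGen_sup_pairRel_iff.mp hyx with hyx | ⟨hya, hcx⟩
  · exact hq.antisymm x y hxy hyx
  · exact (hca ((hcx.trans hxy).trans hya)).elim
  · exact (hca ((hcy.trans hyx).trans hxa)).elim
  · exact (hca (hcx.trans hxa)).elim

theorem reflTransGen_sup_chainRel :
    ReflTransGen (q ⊔ chainRel a c b) = ReflTransGen (q ⊔ pairRel a c ⊔ pairRel c b) := by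
  refine le_antisymm (reflTransGen_closed fun x y h => ?_) (ReflTransGen.mono ?_)
  · have hac : ReflTransGen (q ⊔ pairRel a c ⊔ pairRel c b) a c :=
      .single (Or.inl (Or.inr (Or.inr ⟨rfl, rfl⟩)))
    have hcb : ReflTransGen (q ⊔ pairRel a c ⊔ pairRel c b) c b :=
      .single (Or.inr (Or.inr ⟨rfl, rfl⟩))
    rcases h with hq | rfl | ⟨rfl, rfl⟩ | ⟨rfl, rfl⟩ | ⟨rfl, rfl⟩
    · exact .single (Or.inl (Or.inl hq))
    · exact .refl
    · exact hac
    · exact hcb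
    · exact hac.trans hcb
  · rintro x y ((hq | rfl | ⟨rfl, rfl⟩) | rfl | ⟨rfl, rfl⟩)
    exacts [Or.inl hq, Or.inr (Or.inl rfl), Or.inr (Or.inr (Or.inl ⟨rfl, rfl⟩)),
      Or.inr (Or.inl rfl), Or.inr (Or.inr (Or.inr (Or.inl ⟨rfl, rfl⟩)))]

theorem antisymm_reflTransGen_sup_chainRel_iff (hq : Std.Antisymm (ReflTransGen q))
    (hab : ReflTransGen q a b) (hne_ab : a ≠ b) (hne_ac : a ≠ c) (hne_cb : c ≠ b) :
    Std.Antisymm (ReflTransGen (q ⊔ chainRel a c b)) ↔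
      ¬ ReflTransGen q c a ∧ ¬ ReflTransGen q b c := by
  rw [reflTransGen_sup_chainRel]
  by_cases hca : ReflTransGen q c a
  · refine iff_of_false (fun h => ?_) (fun h => h.1 hca)
    have := antisymm_reflTransGen_of_le le_sup_left h
    exact (antisymm_reflTransGen_sup_pairRel_iff hq hne_ac).mp this hca
  have hq' := (antisymm_reflTransGen_sup_pairRel_iff hq hne_ac).mpr hca
  have hba : ¬ ReflTransGen q b a := fun hba => hne_ab (hq.antisymm a b hab hba)
  rw [antisymm_reflTransGen_sup_pairRel_iff hq' hne_cb, reflTransGen_sup_pairRel_iff]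
  simp [hca, hba]

end Edges

section Compatible

variable {X : Type*} {r p s : X → X → Prop} {a b c : X}

theorem compatible_iff_antisymm : Compatible r s ↔ Std.Antisymm (ReflTransGen (r ⊔ s)) := by
  rw [antisymm_reflTransGen_iff_transGen]
  exact ⟨fun h => ⟨h⟩, fun h => h.antisymm⟩

theorem compatible_joinRel_iff :
    Compatible (joinRel r p) s ↔ Std.Antisymm (ReflTransGen (r ⊔ s ⊔ p)) := by
  rw [compatible_iff_antisymm]
  change Std.Antisymm (ReflTransGen (ReflTransGen (r ⊔ p) ⊔ s)) ↔ _
  rw [reflTransGen_reflTransGen_sup, sup_right_comm]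

theorem Compatible.of_joinRel (h : Compatible (joinRel r p) s) : Compatible r s :=
  compatible_iff_antisymm.mpr <|
    antisymm_reflTransGen_of_le le_sup_left (compatible_joinRel_iff.mp h)

theorem bracket_add_bracket_joinRel_chainRel (S : Type*) [CommSemiring S] (hab : r a b)
    (hne_ab : a ≠ b) (hne_ac : a ≠ c) (hne_cb : c ≠ b) :
    bracket S r s + bracket S (joinRel r (chainRel a c b)) s =
      bracket S (joinRel r (pairRel a c)) s + bracket S (joinRel r (pairRel c b)) s := by
  classical
  by_cases hrs : Compatible r s
  swap
  · simp [bracket, hrs, mt Compatible.of_joinRel hrs]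
  have hq := compatible_iff_antisymm.mp hrs
  have hab' : ReflTransGen (r ⊔ s) a b := .single (Or.inl hab)
  have hexcl : ¬ (ReflTransGen (r ⊔ s) c a ∧ ReflTransGen (r ⊔ s) b c) := fun ⟨hca, hbc⟩ =>
    hne_ac (hq.antisymm a c (hab'.trans hbc) hca)
  simp only [bracket, hrs, compatible_joinRel_iff,
    antisymm_reflTransGen_sup_pairRel_iff hq hne_ac,
    antisymm_reflTransGen_sup_pairRel_iff hq hne_cb,
    antisymm_reflTransGen_sup_chainRel_iff hq hab' hne_ab hne_ac hne_cb]
  by_cases hca : ReflTransGen (r ⊔ s) c a <;> by_cases hbc : ReflTransGen (r ⊔ s) b c <;>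
    simp_all

end Compatible

section PartialOrder

variable {X : Type*} {r : X → X → Prop} {a b c : X}

theorem isPartialOrder_joinRel_pairRel (hr : IsPartialOrder X r) (hac : ¬ r a c)
    (hca : ¬ r c a) : IsPartialOrder X (joinRel r (pairRel a c)) := by
  have hr' : Std.Antisymm (ReflTransGen r) := by rw [reflTransGen_eq_self]; infer_instance
  refine isPartialOrder_reflTransGen_iff.mpr
    ((antisymm_reflTransGen_sup_pairRel_iff hr' (ne_of_not_rel hac)).mpr ?_)
  rwa [reflTransGen_eq_self]

theorem isPartialOrder_joinRel_chainRel (hr : IsPartialOrder X r) (hab : r a b) (hne : a ≠ b)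
    (hac : ¬ r a c) (hca : ¬ r c a) (hbc : ¬ r b c) :
    IsPartialOrder X (joinRel r (chainRel a c b)) := by
  have hr' : Std.Antisymm (ReflTransGen r) := by rw [reflTransGen_eq_self]; infer_instance
  refine isPartialOrder_reflTransGen_iff.mpr
    ((antisymm_reflTransGen_sup_chainRel_iff hr' (.single hab) hne
      (ne_of_not_rel hac) (ne_of_not_rel hbc).symm).mpr ?_)
  rw [reflTransGen_eq_self]
  exact ⟨hca, hbc⟩

def incomparablePairs (r : X → X → Prop) : Set (X × X) :=
  {x | ¬ r x.1 x.2 ∧ ¬ r x.2 x.1}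

theorem ncard_incomparablePairs_joinRel_lt [Finite X] (p : X → X → Prop) {u v : X}
    (huv : joinRel r p u v) (hu : ¬ r u v) (hv : ¬ r v u) :
    (incomparablePairs (joinRel r p)).ncard < (incomparablePairs r).ncard := by
  have hle : r ≤ joinRel r p := fun x y h => .single (Or.inl h)
  refine Set.ncard_lt_ncard ((Set.ssubset_iff_of_subset fun x hx => ?_).mpr ?_)
  · exact ⟨mt (hle _ _) hx.1, mt (hle _ _) hx.2⟩
  · exact ⟨(u, v), ⟨hu, hv⟩, fun h => h.1 huv⟩

theorem isWeakTotalOrder_of_not_exists (hr : IsPartialOrder X r)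
    (h : ¬ ∃ a b c : X, (r a b ∧ a ≠ b) ∧ (¬ r a c ∧ ¬ r c a) ∧ (¬ r b c ∧ ¬ r c b)) :
    IsWeakTotalOrder X r := by
  refine ⟨hr, fun x y z ⟨hxy, hne⟩ => ?_⟩
  by_cases hxz : x = z
  · exact Or.inr ⟨hxz ▸ hxy, hxz ▸ hne⟩
  by_cases hzy : z = y
  · exact Or.inl ⟨hzy ▸ hxy, hxz⟩
  by_contra hc
  refine h ⟨x, y, z, ⟨hxy, hne⟩, ⟨fun hxz' => hc (Or.inl ⟨hxz', hxz⟩), fun hzx => ?_⟩,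
    fun hyz => hc (Or.inl ⟨_root_.trans hxy hyz, hxz⟩), fun hzy' => hc (Or.inr ⟨hzy', hzy⟩)⟩
  exact hc (Or.inr ⟨_root_.trans hzx hxy, hzy⟩)

end PartialOrder

section Generation

variable {X : Type*} (S : Type*) [CommRing S]

/-- The class of `r` modulo `Z(X)`: combinations are congruent iff their pairings agree on
every partial order. -/
noncomputable def bracketOnPartialOrders (r : X → X → Prop) :
    {s : X → X → Prop // IsPartialOrder X s} → S :=
  fun s => bracket S r s

theorem bracketOnPartialOrders_mem_span_weakTotalOrders [Finite X] {r : X → X → Prop}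
    (hr : IsPartialOrder X r) :
    bracketOnPartialOrders S r ∈
      Submodule.span ℤ (bracketOnPartialOrders S '' {w | IsWeakTotalOrder X w}) := by
  induction hn : (incomparablePairs r).ncard using Nat.strong_induction_on generalizing r with
  | _ n ih =>
    by_cases hN : ∃ a b c : X, (r a b ∧ a ≠ b) ∧ (¬ r a c ∧ ¬ r c a) ∧ (¬ r b c ∧ ¬ r c b)
    swap
    · exact Submodule.subset_span ⟨r, isWeakTotalOrder_of_not_exists hr hN, rfl⟩
    obtain ⟨a, b, c, ⟨hab, hne⟩, ⟨hac, hca⟩, ⟨hbc, hcb⟩⟩ := hN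
    have hsplit : bracketOnPartialOrders S r =
        bracketOnPartialOrders S (joinRel r (pairRel a c)) +
          bracketOnPartialOrders S (joinRel r (pairRel c b)) -
          bracketOnPartialOrders S (joinRel r (chainRel a c b)) := by
      funext s
      exact eq_sub_of_add_eq (bracket_add_bracket_joinRel_chainRel S hab hne
        (ne_of_not_rel hac) (ne_of_not_rel hcb))
    have hlt {p : X → X → Prop} {u v : X} (huv : joinRel r p u v) (hu : ¬ r u v)
        (hv : ¬ r v u) : (incomparablePairs (joinRel r p)).ncard < n :=
      hn ▸ ncard_incomparablePairs_joinRel_lt p huv hu hv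
    rw [hsplit]
    refine sub_mem (add_mem ?_ ?_) ?_
    · exact ih _ (hlt (.single (Or.inr (Or.inr ⟨rfl, rfl⟩))) hac hca)
        (isPartialOrder_joinRel_pairRel hr hac hca) rfl
    · exact ih _ (hlt (.single (Or.inr (Or.inr ⟨rfl, rfl⟩))) hcb hbc)
        (isPartialOrder_joinRel_pairRel hr hcb hbc) rfl
    · exact ih _ (hlt (.single (Or.inr (Or.inr (Or.inl ⟨rfl, rfl⟩)))) hac hca)
        (isPartialOrder_joinRel_chainRel hr hab hne hac hca hbc) rfl

end Generation

theorem stmt17 {X : Type*} [Finite X] {S : Type*} [CommRing S] :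
    -- every partial order is congruent modulo the kernel of the pairing to a
    -- ℤ-linear combination of weak total orders
    (∀ r : X → X → Prop, IsPartialOrder X r →
      ∃ (n : ℕ) (w : Fin n → (X → X → Prop)) (c : Fin n → ℤ),
        (∀ i, IsWeakTotalOrder X (w i)) ∧
        ∀ s : X → X → Prop, IsPartialOrder X s →
          bracket S r s = ∑ i, c i • bracket S (w i) s) ∧
    -- the splitting identity at a witness (a,b,c) ∈ N(r)
    (∀ r : X → X → Prop, IsPartialOrder X r → ∀ a b c : X,
      (r a b ∧ a ≠ b) → (¬ r a c ∧ ¬ r c a) → (¬ r b c ∧ ¬ r c b) →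
      ∀ s : X → X → Prop, IsPartialOrder X s →
        bracket S r s + bracket S (joinRel r (chainRel a c b)) s =
          bracket S (joinRel r (pairRel a c)) s +
            bracket S (joinRel r (pairRel c b)) s) := by
  refine ⟨fun r hr => ?_, ?_⟩
  · obtain ⟨n, c, g, hg⟩ :=
      Submodule.mem_span_set'.mp (bracketOnPartialOrders_mem_span_weakTotalOrders S hr)
    choose w hw hwg using fun i => (g i).2
    refine ⟨n, w, c, hw, fun s hs => ?_⟩
    have := congr_fun hg ⟨s, hs⟩
    simp only [← hwg, Finset.sum_apply, Pi.smul_apply] at this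
    exact this.symm
  · rintro r hr a b c ⟨hab, hne⟩ ⟨hac, -⟩ ⟨-, hcb⟩ s -
    exact bracket_add_bracket_joinRel_chainRel S hab hne
      (ne_of_not_rel hac) (ne_of_not_rel hcb)
end
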